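/- Let b ∈ ℝ, λ ∈ ℂ, let v ∈ H¹(ℝ,ℂ) and f ∈ L²(ℝ,ℂ), and suppose that (1 − φ(ξ)²)·v'(ξ) + (4−b)·φ(ξ)·φ'(ξ)·v(ξ) − λ·v(ξ) = f(ξ) for almost every ξ ∈ ℝ (v' the weak derivative). Then Re(λ)·‖v‖²_{L²} + (b−5)·∫_ℝ φ(ξ)·φ'(ξ)·|v(ξ)|² dξ = −Re⟨f, v⟩, where ⟨f, v⟩ = ∫_ℝ f(ξ)·conj(v(ξ)) dξ. -/

import Mathlib

open MeasureTheory Complex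

/-- The peakon profile `φ(x) = exp(-|x|)`. -/
noncomputable def phi (x : ℝ) : ℝ := Real.exp (-|x|)

/-- The piecewise derivative of the peakon profile, `φ'(x) = -sgn(x)·exp(-|x|)`. -/
noncomputable def phi' (x : ℝ) : ℝ := -Real.sign x * Real.exp (-|x|)

/-- Convolution of real-valued functions on `ℝ`. -/
noncomputable def conv (f g : ℝ → ℝ) (x : ℝ) : ℝ := ∫ y : ℝ, f (x - y) * g y

open Set Filter in
/-- Fubini swap over the region `{t < x}`. -/
lemma fubini_swap {K : Type*} [RCLike K] (P Q : ℝ → K) (hP : Integrable P (volume : Measure ℝ))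
    (hQ : Integrable Q (volume : Measure ℝ)) :
    ∫ x : ℝ, Q x * (∫ t in Set.Iio x, P t) = ∫ t : ℝ, P t * (∫ x in Set.Ioi t, Q x) := by
  have hmeas : MeasurableSet {p : ℝ × ℝ | p.2 < p.1} :=
    measurableSet_lt measurable_snd measurable_fst
  have hK : Integrable ({p : ℝ × ℝ | p.2 < p.1}.indicator (fun p => Q p.1 * P p.2))
      ((volume : Measure ℝ).prod volume) := (hQ.mul_prod hP).indicator hmeas
  have swap := MeasureTheory.integral_integral_swap
    (f := fun x t => ({p : ℝ × ℝ | p.2 < p.1}.indicator (fun p => Q p.1 * P p.2)) (x, t)) hK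
  calc ∫ x : ℝ, Q x * (∫ t in Set.Iio x, P t)
      = ∫ x : ℝ, ∫ t : ℝ, ({p : ℝ × ℝ | p.2 < p.1}.indicator (fun p => Q p.1 * P p.2)) (x, t) := by
        refine integral_congr_ae (Eventually.of_forall fun x => ?_)
        have h1 : ∀ t : ℝ, ({p : ℝ × ℝ | p.2 < p.1}.indicator (fun p => Q p.1 * P p.2)) (x, t)
            = (Set.Iio x).indicator (fun t => Q x * P t) t := by
          intro t; simp [Set.indicator_apply]
        simp_rw [h1]
        rw [MeasureTheory.integral_indicator measurableSet_Iio, integral_const_mul]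
    _ = ∫ t : ℝ, ∫ x : ℝ, ({p : ℝ × ℝ | p.2 < p.1}.indicator (fun p => Q p.1 * P p.2)) (x, t) :=
        swap
    _ = ∫ t : ℝ, P t * (∫ x in Set.Ioi t, Q x) := by
        refine integral_congr_ae (Eventually.of_forall fun t => ?_)
        have h1 : ∀ x : ℝ, ({p : ℝ × ℝ | p.2 < p.1}.indicator (fun p => Q p.1 * P p.2)) (x, t)
            = (Set.Ioi t).indicator (fun x => Q x * P t) x := by
          intro x; simp [Set.indicator_apply]
        simp_rw [h1]
        rw [MeasureTheory.integral_indicator measurableSet_Ioi, integral_mul_const, mul_comm]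

open Set Filter in
/-- Triangle Fubini on a bounded interval. -/
lemma helper_triangle {a b : ℝ} (p q : ℝ → ℂ)
    (hp : IntegrableOn p (Set.Ioo a b) (volume : Measure ℝ))
    (hq : IntegrableOn q (Set.Ioo a b) (volume : Measure ℝ)) :
    ∫ y in Set.Ioo a b, q y * (∫ t in Set.Ioo a y, p t)
      = ∫ t in Set.Ioo a b, p t * (∫ x in Set.Ioo t b, q x) := by
  have hPind : Integrable ((Set.Ioo a b).indicator p) (volume : Measure ℝ) :=
    hp.integrable_indicator measurableSet_Ioo
  have hQind : Integrable ((Set.Ioo a b).indicator q) (volume : Measure ℝ) :=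
    hq.integrable_indicator measurableSet_Ioo
  have fs := fubini_swap ((Set.Ioo a b).indicator p) ((Set.Ioo a b).indicator q) hPind hQind
  have hL : ∫ x : ℝ, ((Set.Ioo a b).indicator q) x * (∫ t in Set.Iio x, ((Set.Ioo a b).indicator p) t)
      = ∫ y in Set.Ioo a b, q y * (∫ t in Set.Ioo a y, p t) := by
    have h1 : ∀ x : ℝ, ((Set.Ioo a b).indicator q) x * (∫ t in Set.Iio x, ((Set.Ioo a b).indicator p) t)
        = (Set.Ioo a b).indicator
            (fun x => q x * (∫ t in Set.Iio x, ((Set.Ioo a b).indicator p) t)) x := by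
      intro x; by_cases hx : x ∈ Set.Ioo a b <;> simp [hx]
    simp_rw [h1]
    rw [MeasureTheory.integral_indicator measurableSet_Ioo]
    refine setIntegral_congr_fun measurableSet_Ioo (fun y hy => ?_)
    congr 1
    rw [MeasureTheory.integral_indicator measurableSet_Ioo,
      Measure.restrict_restrict measurableSet_Ioo, Set.Ioo_inter_Iio, min_eq_right hy.2.le]
  have hR : ∫ t : ℝ, ((Set.Ioo a b).indicator p) t * (∫ x in Set.Ioi t, ((Set.Ioo a b).indicator q) x)
      = ∫ t in Set.Ioo a b, p t * (∫ x in Set.Ioo t b, q x) := by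
    have h1 : ∀ t : ℝ, ((Set.Ioo a b).indicator p) t * (∫ x in Set.Ioi t, ((Set.Ioo a b).indicator q) x)
        = (Set.Ioo a b).indicator
            (fun t => p t * (∫ x in Set.Ioi t, ((Set.Ioo a b).indicator q) x)) t := by
      intro t; by_cases ht : t ∈ Set.Ioo a b <;> simp [ht]
    simp_rw [h1]
    rw [MeasureTheory.integral_indicator measurableSet_Ioo]
    refine setIntegral_congr_fun measurableSet_Ioo (fun t ht => ?_)
    congr 1
    rw [MeasureTheory.integral_indicator measurableSet_Ioo,
      Measure.restrict_restrict measurableSet_Ioo, Set.Ioo_inter_Ioi, max_eq_right ht.1.le]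
  rw [← hL, fs, hR]

lemma intervalIntegrable_of_memL2 {u : ℝ → ℂ} (hu : MemLp u 2 (volume : Measure ℝ)) (a b : ℝ) :
    IntervalIntegrable u volume a b := by
  rw [intervalIntegrable_iff]
  haveI : IsFiniteMeasure ((volume : Measure ℝ).restrict (Set.uIoc a b)) := by
    constructor
    rw [Measure.restrict_apply_univ]
    exact measure_Ioc_lt_top
  exact (hu.restrict (Set.uIoc a b)).integrable one_le_two

lemma intervalIntegral_conj (u : ℝ → ℂ) (a b : ℝ) :
    ∫ t in a..b, (starRingEnd ℂ) (u t) = (starRingEnd ℂ) (∫ t in a..b, u t) := by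
  rcases le_total a b with h | h
  · rw [intervalIntegral.integral_of_le h, intervalIntegral.integral_of_le h, integral_conj]
  · rw [intervalIntegral.integral_of_ge h, intervalIntegral.integral_of_ge h, integral_conj,
      map_neg]

lemma intervalIntegral_re {u : ℝ → ℂ} {a b : ℝ} (hu : IntervalIntegrable u volume a b) :
    ∫ t in a..b, (u t).re = (∫ t in a..b, u t).re := by
  rcases le_total a b with h | h
  · rw [intervalIntegral.integral_of_le h, intervalIntegral.integral_of_le h]
    have := integral_re ((intervalIntegrable_iff_integrableOn_Ioc_of_le h).1 hu)
    simpa using this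
  · rw [intervalIntegral.integral_of_ge h, intervalIntegral.integral_of_ge h]
    have := integral_re ((intervalIntegrable_iff_integrableOn_Ioc_of_le h).1 hu.symm)
    simp only [RCLike.re_to_complex] at this
    rw [Complex.neg_re, this]

lemma mul_L2_integrable {a b : ℝ → ℂ} (ha : MemLp a 2 (volume : Measure ℝ))
    (hb : MemLp b 2 (volume : Measure ℝ)) :
    Integrable (fun x => a x * b x) (volume : Measure ℝ) := by
  refine Integrable.mono' (g := fun x => (‖a x‖ ^ 2 + ‖b x‖ ^ 2) / 2)
    ((((memLp_two_iff_integrable_sq_norm ha.1).1 ha).add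
      ((memLp_two_iff_integrable_sq_norm hb.1).1 hb)).div_const 2) (ha.1.mul hb.1) ?_
  refine Filter.Eventually.of_forall fun x => ?_
  rw [norm_mul]
  nlinarith [norm_nonneg (a x), norm_nonneg (b x), sq_nonneg (‖a x‖ - ‖b x‖)]

lemma integrable_conj_of {μ : Measure ℝ} {u : ℝ → ℂ} (hu : Integrable u μ) :
    Integrable (fun t => (starRingEnd ℂ) (u t)) μ := by
  refine Integrable.mono' hu.norm
    (continuous_star.comp_aestronglyMeasurable hu.aestronglyMeasurable) ?_
  exact Filter.Eventually.of_forall fun t => le_of_eq (RCLike.norm_conj (u t))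

open Set Filter in
lemma integrable_exp_neg_two_abs : Integrable (fun x : ℝ => Real.exp (-(2 * |x|))) volume := by
  have hcont : Continuous fun x : ℝ => Real.exp (-(2 * |x|)) :=
    Real.continuous_exp.comp ((continuous_const.mul _root_.continuous_abs).neg)
  have h1 : IntegrableOn (fun x : ℝ => Real.exp (-(2 * |x|))) (Ioi 0) volume := by
    refine (exp_neg_integrableOn_Ioi 0 (by norm_num : (0:ℝ) < 2)).congr_fun ?_ measurableSet_Ioi
    intro x hx
    show Real.exp (-2 * x) = Real.exp (-(2 * |x|))
    rw [_root_.abs_of_pos hx, neg_mul]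
  have h2 : IntegrableOn (fun x : ℝ => Real.exp (-(2 * |x|))) (Iic 0) volume := by
    refine integrableOn_Iic_of_intervalIntegral_norm_bounded (1/2 : ℝ) (0 : ℝ)
      (a := fun r : ℝ => r) (l := atBot) (fun i => hcont.integrableOn_Ioc) tendsto_id ?_
    filter_upwards [eventually_le_atBot (0:ℝ)] with i hi
    have heq : Set.EqOn (fun x : ℝ => ‖Real.exp (-(2 * |x|))‖) (fun x : ℝ => Real.exp (2 * x))
        (Set.uIcc i 0) := by
      intro x hx
      rw [Set.uIcc_of_le hi] at hx
      have hx0 : x ≤ 0 := hx.2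
      show ‖Real.exp (-(2 * |x|))‖ = Real.exp (2 * x)
      rw [Real.norm_eq_abs, _root_.abs_of_pos (Real.exp_pos _), _root_.abs_of_nonpos hx0]
      congr 1
      ring
    rw [intervalIntegral.integral_congr heq]
    have hderiv : ∀ x ∈ Set.uIcc i 0,
        HasDerivAt (fun y : ℝ => Real.exp (2 * y) / 2) (Real.exp (2 * x)) x := by
      intro x _
      have h := (((hasDerivAt_id x).const_mul (2:ℝ)).exp).div_const 2
      simpa using h
    have hi2 : IntervalIntegrable (fun x : ℝ => Real.exp (2 * x)) volume i 0 :=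
      (Real.continuous_exp.comp (continuous_const.mul continuous_id)).intervalIntegrable _ _
    rw [intervalIntegral.integral_eq_sub_of_hasDerivAt hderiv hi2]
    have := Real.exp_pos (2 * i)
    simp only [mul_zero, Real.exp_zero]
    linarith
  rw [← integrableOn_univ, ← Set.Iic_union_Ioi (a := (0:ℝ))]
  exact h2.union h1

lemma phi_sq (x : ℝ) : phi x ^ 2 = Real.exp (-(2 * |x|)) := by
  rw [phi, pow_two, ← Real.exp_add]
  ring_nf

lemma phi_mul_phi' (x : ℝ) : phi x * phi' x = -Real.sign x * Real.exp (-(2 * |x|)) := by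
  rw [phi, phi', ← mul_assoc]
  rw [show Real.exp (-|x|) * -Real.sign x = -Real.sign x * Real.exp (-|x|) from mul_comm _ _]
  rw [mul_assoc, ← Real.exp_add]
  ring_nf

lemma abs_sign_le (x : ℝ) : |Real.sign x| ≤ 1 := by
  rcases lt_trichotomy x 0 with h | h | h
  · rw [Real.sign_of_neg h]; norm_num
  · rw [h, Real.sign_zero]; norm_num
  · rw [Real.sign_of_pos h]; norm_num

lemma measurable_sign_real : Measurable Real.sign := by
  have h : Real.sign = fun r : ℝ => if r < 0 then (-1:ℝ) else if 0 < r then 1 else 0 := by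
    funext r; rw [Real.sign]
  rw [h]
  exact Measurable.ite (measurableSet_lt measurable_id measurable_const) measurable_const
    (Measurable.ite (measurableSet_lt measurable_const measurable_id) measurable_const
      measurable_const)

lemma integrable_m : Integrable (fun x : ℝ => -2 * (phi x * phi' x)) volume := by
  have hfun : (fun x : ℝ => -2 * (phi x * phi' x))
      = fun x => -2 * (-Real.sign x * Real.exp (-(2 * |x|))) := by
    funext x; rw [phi_mul_phi' x]
  rw [hfun]
  refine Integrable.mono' (integrable_exp_neg_two_abs.const_mul 2) ?_ ?_
  · exact (measurable_const.mul ((measurable_sign_real.neg).mul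
      (Real.measurable_exp.comp ((measurable_const.mul measurable_abs).neg)))).aestronglyMeasurable
  · refine Filter.Eventually.of_forall fun x => ?_
    have hs := _root_.abs_le.1 (abs_sign_le x)
    have he := Real.exp_pos (-(2 * |x|))
    rw [Real.norm_eq_abs]
    refine _root_.abs_le.2 ⟨?_, ?_⟩ <;> nlinarith [hs.1, hs.2]

lemma phiphi'_le_one (x : ℝ) : |phi x * phi' x| ≤ 1 := by
  rw [phi_mul_phi']
  have hs := _root_.abs_le.1 (abs_sign_le x)
  have he := Real.exp_pos (-(2 * |x|))
  have h3 : Real.exp (-(2 * |x|)) ≤ 1 := by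
    rw [Real.exp_le_one_iff]
    have := _root_.abs_nonneg x
    linarith
  refine _root_.abs_le.2 ⟨?_, ?_⟩ <;> nlinarith [hs.1, hs.2]

lemma Wprim (x : ℝ) : 1 - phi x ^ 2 = ∫ t in (0:ℝ)..x, -2 * (phi t * phi' t) := by
  have key : ∀ t : ℝ, -2 * (phi t * phi' t) = 2 * Real.sign t * Real.exp (-(2 * |t|)) := by
    intro t; rw [phi_mul_phi']; ring
  have hcont : ContinuousOn (fun y : ℝ => 1 - Real.exp (-(2 * |y|))) (Set.uIcc 0 x) :=
    (continuous_const.sub (Real.continuous_exp.comp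
      ((continuous_const.mul _root_.continuous_abs).neg))).continuousOn
  have hderiv : ∀ t ∈ Set.Ioo (min 0 x) (max 0 x),
      HasDerivWithinAt (fun y : ℝ => 1 - Real.exp (-(2 * |y|)))
        (2 * Real.sign t * Real.exp (-(2 * |t|))) (Set.Ioi t) t := by
    intro t ht
    have ht0 : t ≠ 0 := by
      rintro rfl
      have h1 : min 0 x < 0 := ht.1
      have h2 : 0 < max 0 x := ht.2
      rcases le_total 0 x with h | h
      · rw [min_eq_left h] at h1; exact lt_irrefl _ h1
      · rw [max_eq_left h] at h2; exact lt_irrefl _ h2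
    rcases ht0.lt_or_gt with htneg | htpos
    · have hev : (fun y : ℝ => 1 - Real.exp (-(2 * |y|))) =ᶠ[nhds t]
          (fun y : ℝ => 1 - Real.exp (2 * y)) := by
        filter_upwards [Iio_mem_nhds htneg] with y hy
        rw [_root_.abs_of_neg hy]
        ring_nf
      have hd : HasDerivAt (fun y : ℝ => 1 - Real.exp (2 * y)) (-(Real.exp (2 * t) * 2)) t := by
        have := (((hasDerivAt_id t).const_mul (2:ℝ)).exp).const_sub 1
        simpa using this
      have hD : HasDerivAt (fun y : ℝ => 1 - Real.exp (-(2 * |y|))) (-(Real.exp (2 * t) * 2)) t :=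
        hd.congr_of_eventuallyEq hev
      have hval : 2 * Real.sign t * Real.exp (-(2 * |t|)) = -(Real.exp (2 * t) * 2) := by
        rw [Real.sign_of_neg htneg, _root_.abs_of_neg htneg]
        ring_nf
      rw [hval]
      exact hD.hasDerivWithinAt
    · have hev : (fun y : ℝ => 1 - Real.exp (-(2 * |y|))) =ᶠ[nhds t]
          (fun y : ℝ => 1 - Real.exp (-(2 * y))) := by
        filter_upwards [Ioi_mem_nhds htpos] with y hy
        rw [_root_.abs_of_pos hy]
      have hd : HasDerivAt (fun y : ℝ => 1 - Real.exp (-(2 * y)))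
          (-(Real.exp (-(2 * t)) * (-2))) t := by
        have := ((((hasDerivAt_id t).const_mul (2:ℝ)).neg).exp).const_sub 1
        simpa using this
      have hD : HasDerivAt (fun y : ℝ => 1 - Real.exp (-(2 * |y|)))
          (-(Real.exp (-(2 * t)) * (-2))) t := hd.congr_of_eventuallyEq hev
      have hval : 2 * Real.sign t * Real.exp (-(2 * |t|)) = -(Real.exp (-(2 * t)) * (-2)) := by
        rw [Real.sign_of_pos htpos, _root_.abs_of_pos htpos]
        ring
      rw [hval]
      exact hD.hasDerivWithinAt
  have hint : IntervalIntegrable (fun t : ℝ => 2 * Real.sign t * Real.exp (-(2 * |t|)))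
      volume 0 x := by
    have hIG : Integrable (fun t : ℝ => 2 * Real.sign t * Real.exp (-(2 * |t|))) volume := by
      refine integrable_m.congr (Filter.Eventually.of_forall fun t => ?_)
      exact key t
    exact hIG.intervalIntegrable
  have hFTC := intervalIntegral.integral_eq_sub_of_hasDeriv_right hcont hderiv hint
  have hfun : (fun t : ℝ => -2 * (phi t * phi' t))
      = fun t : ℝ => 2 * Real.sign t * Real.exp (-(2 * |t|)) := funext key
  rw [phi_sq, hfun, hFTC]
  simp

open Set Filter in
lemma tendsto_top_zero {g : ℝ → ℝ} (hg : Integrable g volume) (h0 : ∀ x, 0 ≤ g x) {L : ℝ}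
    (hT : Tendsto g atTop (nhds L)) : L = 0 := by
  by_contra hL
  have hL0 : 0 ≤ L := ge_of_tendsto' hT h0
  have hLpos : 0 < L := hL0.lt_of_ne (Ne.symm hL)
  obtain ⟨A, hA⟩ := Filter.eventually_atTop.1 (hT.eventually (eventually_gt_nhds
    (by linarith : L/2 < L)))
  have hconst : Integrable (fun _ : ℝ => L/2) (volume.restrict (Set.Ici A)) := by
    refine Integrable.mono' hg.integrableOn aestronglyMeasurable_const ?_
    refine (ae_restrict_iff' measurableSet_Ici).2 (Filter.Eventually.of_forall fun x hx => ?_)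
    have h := (hA x hx).le
    rw [Real.norm_eq_abs]
    refine _root_.abs_le.2 ⟨?_, ?_⟩ <;> [linarith [h0 x]; linarith]
  rcases integrable_const_iff.1 hconst with h | h
  · exact hL (by linarith)
  · have h := h.measure_univ_lt_top
    rw [Measure.restrict_apply_univ, Real.volume_Ici] at h
    exact lt_irrefl _ h

open Set Filter in
lemma tendsto_bot_zero {g : ℝ → ℝ} (hg : Integrable g volume) (h0 : ∀ x, 0 ≤ g x) {L : ℝ}
    (hT : Tendsto g atBot (nhds L)) : L = 0 := by
  by_contra hL
  have hL0 : 0 ≤ L := ge_of_tendsto' hT h0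
  have hLpos : 0 < L := hL0.lt_of_ne (Ne.symm hL)
  obtain ⟨A, hA⟩ := Filter.eventually_atBot.1 (hT.eventually (eventually_gt_nhds
    (by linarith : L/2 < L)))
  have hconst : Integrable (fun _ : ℝ => L/2) (volume.restrict (Set.Iic A)) := by
    refine Integrable.mono' hg.integrableOn aestronglyMeasurable_const ?_
    refine (ae_restrict_iff' measurableSet_Iic).2 (Filter.Eventually.of_forall fun x hx => ?_)
    have h := (hA x hx).le
    rw [Real.norm_eq_abs]
    refine _root_.abs_le.2 ⟨?_, ?_⟩ <;> [linarith [h0 x]; linarith]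
  rcases integrable_const_iff.1 hconst with h | h
  · exact hL (by linarith)
  · have h := h.measure_univ_lt_top
    rw [Measure.restrict_apply_univ, Real.volume_Iic] at h
    exact lt_irrefl _ h

/-- the energy identity
`Re(λ)·‖v‖² + (b-5)·∫ φφ'|v|² = -Re⟨f,v⟩` for solutions `v ∈ H¹(ℝ,ℂ)` of the
resolvent equation `(1-φ²)v' + (4-b)φφ'v - λv = f` with `f ∈ L²`.  Membership in `H¹`
is encoded by: `v, v' ∈ L²` and `v` is the primitive of its weak derivative `v'`. -/
theorem energy_identity (b : ℝ) (lam : ℂ) (v v' f : ℝ → ℂ)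
    (hv : MemLp v 2 (volume : Measure ℝ))
    (hv' : MemLp v' 2 (volume : Measure ℝ))
    (hf : MemLp f 2 (volume : Measure ℝ))
    (hprim : ∀ x : ℝ, v x = v 0 + ∫ t in (0 : ℝ)..x, v' t)
    (heq : ∀ᵐ ξ : ℝ, (1 - ((phi ξ : ℝ) : ℂ) ^ 2) * v' ξ
        + (((4 - b) * phi ξ * phi' ξ : ℝ) : ℂ) * v ξ - lam * v ξ = f ξ) :
    lam.re * (∫ ξ : ℝ, ‖v ξ‖ ^ 2) + (b - 5) * (∫ ξ : ℝ, phi ξ * phi' ξ * ‖v ξ‖ ^ 2)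
      = -(∫ ξ : ℝ, f ξ * (starRingEnd ℂ) (v ξ)).re := by
  classical
  have hvc : MemLp (fun x => (starRingEnd ℂ) (v x)) 2 (volume : Measure ℝ) :=
    hv.of_le (continuous_star.comp_aestronglyMeasurable hv.1)
      (Filter.Eventually.of_forall fun x => le_of_eq (RCLike.norm_conj (v x)))
  have hF : Integrable (fun t => v' t * (starRingEnd ℂ) (v t)) volume :=
    mul_L2_integrable hv' hvc
  have hg : Integrable (fun x : ℝ => ‖v x‖ ^ 2) volume :=
    (memLp_two_iff_integrable_sq_norm hv.1).1 hv
  set G : ℝ → ℝ := fun t => 2 * (v' t * (starRingEnd ℂ) (v t)).re with hGdef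
  have hGint : Integrable G volume := by
    have h1 := hF.re
    have h2 := h1.const_mul 2
    refine h2.congr (Filter.Eventually.of_forall fun t => ?_)
    rfl
  have hint_v' : ∀ a c : ℝ, IntervalIntegrable v' volume a c :=
    fun a c => intervalIntegrable_of_memL2 hv' a c
  have hprim' : ∀ a c : ℝ, ∫ t in a..c, v' t = v c - v a := by
    intro a c
    have h := intervalIntegral.integral_add_adjacent_intervals (hint_v' 0 a) (hint_v' a c)
    rw [hprim a, hprim c]
    linear_combination h
  -- the triangular identity
  have main_tri : ∀ x : ℝ, (∫ t in (0:ℝ)..x, v' t * (starRingEnd ℂ) (v t - v 0))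
      = ∫ t in (0:ℝ)..x, (starRingEnd ℂ) (v' t) * (v x - v t) := by
    intro x
    have hIntOn : ∀ a c : ℝ, a ≤ c → IntegrableOn v' (Set.Ioo a c) volume := by
      intro a c hac
      have := (intervalIntegrable_iff_integrableOn_Ioc_of_le hac).1 (hint_v' a c)
      exact this.mono_set Set.Ioo_subset_Ioc_self
    have hconjIntOn : ∀ a c : ℝ, a ≤ c →
        IntegrableOn (fun t => (starRingEnd ℂ) (v' t)) (Set.Ioo a c) volume := by
      intro a c hac
      exact integrable_conj_of (hIntOn a c hac)
    have conj_inner : ∀ a c : ℝ, a ≤ c →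
        ∫ t in Set.Ioo a c, (starRingEnd ℂ) (v' t) = (starRingEnd ℂ) (v c - v a) := by
      intro a c hac
      rw [← MeasureTheory.integral_Ioc_eq_integral_Ioo,
        ← intervalIntegral.integral_of_le hac, intervalIntegral_conj, hprim']
    have inner_v' : ∀ a c : ℝ, a ≤ c → ∫ t in Set.Ioo a c, v' t = v c - v a := by
      intro a c hac
      rw [← MeasureTheory.integral_Ioc_eq_integral_Ioo,
        ← intervalIntegral.integral_of_le hac, hprim']
    rcases le_total 0 x with hx | hx
    · have H := helper_triangle (fun t => (starRingEnd ℂ) (v' t)) v'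
        (hconjIntOn 0 x hx) (hIntOn 0 x hx)
      calc ∫ t in (0:ℝ)..x, v' t * (starRingEnd ℂ) (v t - v 0)
          = ∫ y in Set.Ioo 0 x, v' y * (∫ t in Set.Ioo 0 y, (starRingEnd ℂ) (v' t)) := by
            rw [intervalIntegral.integral_of_le hx, MeasureTheory.integral_Ioc_eq_integral_Ioo]
            refine setIntegral_congr_fun measurableSet_Ioo (fun y hy => ?_)
            rw [conj_inner 0 y hy.1.le]
        _ = ∫ t in Set.Ioo 0 x, (starRingEnd ℂ) (v' t) * (∫ z in Set.Ioo t x, v' z) := H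
        _ = ∫ t in (0:ℝ)..x, (starRingEnd ℂ) (v' t) * (v x - v t) := by
            rw [intervalIntegral.integral_of_le hx, MeasureTheory.integral_Ioc_eq_integral_Ioo]
            refine (setIntegral_congr_fun measurableSet_Ioo (fun t ht => ?_)).symm
            rw [inner_v' t x ht.2.le]
    · have H := helper_triangle v' (fun t => (starRingEnd ℂ) (v' t))
        (hIntOn x 0 hx) (hconjIntOn x 0 hx)
      have hL2 : ∫ y in Set.Ioo x 0, (starRingEnd ℂ) (v' y) * (∫ t in Set.Ioo x y, v' t)
          = ∫ y in Set.Ioo x 0, (starRingEnd ℂ) (v' y) * (v y - v x) := by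
        refine setIntegral_congr_fun measurableSet_Ioo (fun y hy => ?_)
        rw [inner_v' x y hy.1.le]
      have hR2 : ∫ t in Set.Ioo x 0, v' t * (∫ z in Set.Ioo t 0, (starRingEnd ℂ) (v' z))
          = ∫ t in Set.Ioo x 0, v' t * (starRingEnd ℂ) (v 0 - v t) := by
        refine setIntegral_congr_fun measurableSet_Ioo (fun t ht => ?_)
        rw [conj_inner t 0 ht.2.le]
      have key : ∫ y in Set.Ioo x 0, (starRingEnd ℂ) (v' y) * (v y - v x)
          = ∫ t in Set.Ioo x 0, v' t * (starRingEnd ℂ) (v 0 - v t) := by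
        rw [← hL2, H, hR2]
      calc ∫ t in (0:ℝ)..x, v' t * (starRingEnd ℂ) (v t - v 0)
          = -∫ t in Set.Ioo x 0, v' t * (starRingEnd ℂ) (v t - v 0) := by
            rw [intervalIntegral.integral_symm, intervalIntegral.integral_of_le hx,
              MeasureTheory.integral_Ioc_eq_integral_Ioo]
        _ = ∫ t in Set.Ioo x 0, v' t * (starRingEnd ℂ) (v 0 - v t) := by
            rw [← integral_neg]
            refine setIntegral_congr_fun measurableSet_Ioo (fun t _ => ?_)
            rw [show v t - v 0 = -(v 0 - v t) from by ring, map_neg]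
            ring
        _ = ∫ y in Set.Ioo x 0, (starRingEnd ℂ) (v' y) * (v y - v x) := key.symm
        _ = -∫ y in Set.Ioo x 0, (starRingEnd ℂ) (v' y) * (v x - v y) := by
            rw [← integral_neg]
            refine setIntegral_congr_fun measurableSet_Ioo (fun y _ => ?_)
            ring
        _ = ∫ t in (0:ℝ)..x, (starRingEnd ℂ) (v' t) * (v x - v t) := by
            rw [intervalIntegral.integral_symm, intervalIntegral.integral_of_le hx,
              MeasureTheory.integral_Ioc_eq_integral_Ioo]
  -- the real "square" identity
  have hnormsq : ∀ z : ℂ, ‖z‖ ^ 2 = z.re ^ 2 + z.im ^ 2 := by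
    intro z
    rw [Complex.sq_norm, Complex.normSq_apply]
    ring
  have gprim : ∀ x : ℝ, ‖v x‖ ^ 2 = ‖v 0‖ ^ 2 + ∫ t in (0:ℝ)..x, G t := by
    intro x
    set J : ℂ := ∫ t in (0:ℝ)..x, v' t * (starRingEnd ℂ) (v t) with hJ
    have hsplitL : (∫ t in (0:ℝ)..x, v' t * (starRingEnd ℂ) (v t - v 0))
        = J - (v x - v 0) * (starRingEnd ℂ) (v 0) := by
      have h1 : ∀ t : ℝ, v' t * (starRingEnd ℂ) (v t - v 0)
          = v' t * (starRingEnd ℂ) (v t) - v' t * (starRingEnd ℂ) (v 0) := by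
        intro t; rw [map_sub]; ring
      rw [intervalIntegral.integral_congr (fun t _ => h1 t)]
      rw [intervalIntegral.integral_sub (hF.intervalIntegrable)
        ((hint_v' 0 x).mul_const _)]
      rw [intervalIntegral.integral_mul_const, hprim', hJ]
    have hsplitR : (∫ t in (0:ℝ)..x, (starRingEnd ℂ) (v' t) * (v x - v t))
        = (starRingEnd ℂ) (v x - v 0) * v x - (starRingEnd ℂ) J := by
      have h1 : ∀ t : ℝ, (starRingEnd ℂ) (v' t) * (v x - v t)
          = (starRingEnd ℂ) (v' t) * v x - (starRingEnd ℂ) (v' t * (starRingEnd ℂ) (v t)) := by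
        intro t
        rw [map_mul, Complex.conj_conj]
        ring
      rw [intervalIntegral.integral_congr (fun t _ => h1 t)]
      have hconjint : IntervalIntegrable (fun t => (starRingEnd ℂ) (v' t)) volume 0 x := by
        rw [intervalIntegrable_iff]
        exact integrable_conj_of ((intervalIntegrable_iff).1 (hint_v' 0 x))
      have hconjF : IntervalIntegrable
          (fun t => (starRingEnd ℂ) (v' t * (starRingEnd ℂ) (v t))) volume 0 x :=
        (integrable_conj_of hF).intervalIntegrable
      rw [intervalIntegral.integral_sub (hconjint.mul_const _) hconjF]
      rw [intervalIntegral.integral_mul_const, intervalIntegral_conj, intervalIntegral_conj,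
        hprim', hJ]
    have hid : J + (starRingEnd ℂ) J
        = (starRingEnd ℂ) (v x - v 0) * v x + (v x - v 0) * (starRingEnd ℂ) (v 0) := by
      have hmt := main_tri x
      rw [hsplitL, hsplitR] at hmt
      linear_combination hmt
    have hre := congrArg Complex.re hid
    have hGx : ∫ t in (0:ℝ)..x, G t = 2 * J.re := by
      rw [hGdef]
      rw [intervalIntegral.integral_const_mul]
      rw [intervalIntegral_re hF.intervalIntegrable, hJ]
    rw [hGx]
    simp only [Complex.add_re, Complex.sub_re, Complex.mul_re, Complex.conj_re, Complex.conj_im,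
      Complex.sub_im] at hre
    rw [hnormsq, hnormsq]
    nlinarith [hre]
  -- limits at infinity
  have gTop : ‖v 0‖ ^ 2 + ∫ t in Set.Ioi 0, G t = 0 := by
    have ht : Filter.Tendsto (fun x : ℝ => ‖v x‖ ^ 2) Filter.atTop
        (nhds (‖v 0‖ ^ 2 + ∫ t in Set.Ioi 0, G t)) := by
      have h1 := MeasureTheory.intervalIntegral_tendsto_integral_Ioi 0 hGint.integrableOn
        Filter.tendsto_id
      have h2 := h1.const_add (‖v 0‖ ^ 2)
      exact h2.congr fun x => (gprim x).symm
    exact tendsto_top_zero hg (fun x => sq_nonneg _) ht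
  have gBot : ‖v 0‖ ^ 2 - ∫ t in Set.Iic 0, G t = 0 := by
    have h1 := MeasureTheory.intervalIntegral_tendsto_integral_Iic 0 hGint.integrableOn
      Filter.tendsto_id
    have h2 := (h1.neg).const_add (‖v 0‖ ^ 2)
    have ht : Filter.Tendsto (fun x : ℝ => ‖v x‖ ^ 2) Filter.atBot
        (nhds (‖v 0‖ ^ 2 + -∫ t in Set.Iic 0, G t)) := by
      refine h2.congr fun x => ?_
      simp only [id_eq]
      have e : ∫ t in (0:ℝ)..x, G t = -∫ t in x..(0:ℝ), G t :=
        intervalIntegral.integral_symm x 0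
      linarith [gprim x, e]
    have := tendsto_bot_zero hg (fun x => sq_nonneg _) ht
    linarith
  have hIoiG : ∀ t : ℝ, 0 < t → ∫ s in Set.Ioi t, G s = -‖v t‖ ^ 2 := by
    intro t ht
    have hsplit : ∫ s in Set.Ioi 0, G s = (∫ s in Set.Ioc 0 t, G s) + ∫ s in Set.Ioi t, G s := by
      rw [← setIntegral_union (Set.Ioc_disjoint_Ioi le_rfl) measurableSet_Ioi
        hGint.integrableOn hGint.integrableOn, Set.Ioc_union_Ioi_eq_Ioi ht.le]
    have h1 : ∫ s in Set.Ioc 0 t, G s = ‖v t‖ ^ 2 - ‖v 0‖ ^ 2 := by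
      rw [← intervalIntegral.integral_of_le ht.le]
      have := gprim t
      linarith
    linarith [gTop, hsplit, h1]
  have hIioG : ∀ t : ℝ, t < 0 → ∫ s in Set.Iio t, G s = ‖v t‖ ^ 2 := by
    intro t ht
    have hdisj : Disjoint (Set.Iio t) (Set.Ico t 0) :=
      (Set.Iio_disjoint_Ici le_rfl).mono_right Set.Ico_subset_Ici_self
    have hsplit : ∫ s in Set.Iio 0, G s = (∫ s in Set.Iio t, G s) + ∫ s in Set.Ico t 0, G s := by
      rw [← setIntegral_union hdisj measurableSet_Ico
        hGint.integrableOn hGint.integrableOn, Set.Iio_union_Ico_eq_Iio ht.le]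
    have h1 : ∫ s in Set.Ico t 0, G s = ‖v 0‖ ^ 2 - ‖v t‖ ^ 2 := by
      rw [MeasureTheory.integral_Ico_eq_integral_Ioo, ← MeasureTheory.integral_Ioc_eq_integral_Ioo,
        ← intervalIntegral.integral_of_le ht.le]
      have hh := gprim t
      have e : ∫ s in (0:ℝ)..t, G s = -∫ s in t..(0:ℝ), G s :=
        intervalIntegral.integral_symm t 0
      linarith
    have h2 : ∫ s in Set.Iio 0, G s = ‖v 0‖ ^ 2 := by
      rw [← MeasureTheory.integral_Iic_eq_integral_Iio]
      linarith [gBot]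
    linarith
  -- whole-line integration by parts
  have hWG_int : Integrable (fun x : ℝ => (1 - phi x ^ 2) * G x) volume := by
    refine Integrable.bdd_mul (c := 1) hGint ?_ ?_
    · refine Continuous.aestronglyMeasurable ?_
      have hphic : Continuous phi := Real.continuous_exp.comp (_root_.continuous_abs.neg)
      exact continuous_const.sub (hphic.pow 2)
    · refine Filter.Eventually.of_forall fun x => ?_
      rw [Real.norm_eq_abs, phi_sq]
      have h1 := Real.exp_pos (-(2 * |x|))
      have h2 : Real.exp (-(2 * |x|)) ≤ 1 := by
        rw [Real.exp_le_one_iff]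
        have := _root_.abs_nonneg x
        linarith
      refine _root_.abs_le.2 ⟨by linarith, by linarith⟩
  have hmg_int : Integrable (fun x : ℝ => -2 * (phi x * phi' x) * ‖v x‖ ^ 2) volume := by
    refine Integrable.bdd_mul (c := 2) hg ?_ ?_
    · exact integrable_m.aestronglyMeasurable
    · refine Filter.Eventually.of_forall fun x => ?_
      rw [Real.norm_eq_abs, _root_.abs_mul]
      have h1 := phiphi'_le_one x
      have h2 : |(-2:ℝ)| = 2 := by norm_num
      rw [h2]
      nlinarith [_root_.abs_nonneg (phi x * phi' x)]
  have step2 : ∫ x : ℝ, (1 - phi x ^ 2) * G x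
      = -∫ x : ℝ, -2 * (phi x * phi' x) * ‖v x‖ ^ 2 := by
    -- positive side
    have pos : ∫ x in Set.Ioi 0, (1 - phi x ^ 2) * G x
        = -∫ t in Set.Ioi 0, -2 * (phi t * phi' t) * ‖v t‖ ^ 2 := by
      have fs := fubini_swap ((Set.Ioi (0:ℝ)).indicator (fun x => -2 * (phi x * phi' x)))
        ((Set.Ioi (0:ℝ)).indicator G)
        (integrable_m.indicator measurableSet_Ioi) (hGint.indicator measurableSet_Ioi)
      have hLs : ∫ x : ℝ, ((Set.Ioi (0:ℝ)).indicator G) x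
            * (∫ t in Set.Iio x, ((Set.Ioi (0:ℝ)).indicator (fun x => -2 * (phi x * phi' x))) t)
          = ∫ x in Set.Ioi 0, (1 - phi x ^ 2) * G x := by
        have h1 : ∀ x : ℝ, ((Set.Ioi (0:ℝ)).indicator G) x
              * (∫ t in Set.Iio x, ((Set.Ioi (0:ℝ)).indicator (fun x => -2 * (phi x * phi' x))) t)
            = (Set.Ioi (0:ℝ)).indicator
                (fun x => G x * (∫ t in Set.Iio x,
                  ((Set.Ioi (0:ℝ)).indicator (fun x => -2 * (phi x * phi' x))) t)) x := by
          intro x; by_cases hx : x ∈ Set.Ioi (0:ℝ) <;> simp [hx]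
        simp_rw [h1]
        rw [MeasureTheory.integral_indicator measurableSet_Ioi]
        refine setIntegral_congr_fun measurableSet_Ioi (fun x hx => ?_)
        rw [MeasureTheory.integral_indicator measurableSet_Ioi,
          Measure.restrict_restrict measurableSet_Ioi, Set.Ioi_inter_Iio,
          ← MeasureTheory.integral_Ioc_eq_integral_Ioo,
          ← intervalIntegral.integral_of_le (le_of_lt hx), ← Wprim x]
        ring
      have hRs : ∫ t : ℝ, ((Set.Ioi (0:ℝ)).indicator (fun x => -2 * (phi x * phi' x))) t
            * (∫ x in Set.Ioi t, ((Set.Ioi (0:ℝ)).indicator G) x)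
          = -∫ t in Set.Ioi 0, -2 * (phi t * phi' t) * ‖v t‖ ^ 2 := by
        have h1 : ∀ t : ℝ, ((Set.Ioi (0:ℝ)).indicator (fun x => -2 * (phi x * phi' x))) t
              * (∫ x in Set.Ioi t, ((Set.Ioi (0:ℝ)).indicator G) x)
            = (Set.Ioi (0:ℝ)).indicator
                (fun t => -2 * (phi t * phi' t)
                  * (∫ x in Set.Ioi t, ((Set.Ioi (0:ℝ)).indicator G) x)) t := by
          intro t; by_cases ht : t ∈ Set.Ioi (0:ℝ) <;> simp [ht]
        simp_rw [h1]
        rw [MeasureTheory.integral_indicator measurableSet_Ioi, ← integral_neg]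
        refine setIntegral_congr_fun measurableSet_Ioi (fun t ht => ?_)
        rw [MeasureTheory.integral_indicator measurableSet_Ioi,
          Measure.restrict_restrict measurableSet_Ioi, Set.Ioi_inter_Ioi,
          max_eq_right (le_of_lt ht), hIoiG t ht]
        ring
      rw [← hLs, fs, hRs]
    -- negative side
    have neg : ∫ x in Set.Iio 0, (1 - phi x ^ 2) * G x
        = -∫ t in Set.Iio 0, -2 * (phi t * phi' t) * ‖v t‖ ^ 2 := by
      have fs := fubini_swap ((Set.Iio (0:ℝ)).indicator G)
        ((Set.Iio (0:ℝ)).indicator (fun x => -2 * (phi x * phi' x)))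
        (hGint.indicator measurableSet_Iio) (integrable_m.indicator measurableSet_Iio)
      have hLs : ∫ x : ℝ, ((Set.Iio (0:ℝ)).indicator (fun x => -2 * (phi x * phi' x))) x
            * (∫ t in Set.Iio x, ((Set.Iio (0:ℝ)).indicator G) t)
          = ∫ x in Set.Iio 0, -2 * (phi x * phi' x) * ‖v x‖ ^ 2 := by
        have h1 : ∀ x : ℝ, ((Set.Iio (0:ℝ)).indicator (fun x => -2 * (phi x * phi' x))) x
              * (∫ t in Set.Iio x, ((Set.Iio (0:ℝ)).indicator G) t)
            = (Set.Iio (0:ℝ)).indicator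
                (fun x => -2 * (phi x * phi' x)
                  * (∫ t in Set.Iio x, ((Set.Iio (0:ℝ)).indicator G) t)) x := by
          intro x; by_cases hx : x ∈ Set.Iio (0:ℝ) <;> simp [hx]
        simp_rw [h1]
        rw [MeasureTheory.integral_indicator measurableSet_Iio]
        refine setIntegral_congr_fun measurableSet_Iio (fun x hx => ?_)
        rw [MeasureTheory.integral_indicator measurableSet_Iio,
          Measure.restrict_restrict measurableSet_Iio, Set.Iio_inter_Iio,
          min_eq_right (le_of_lt hx), hIioG x hx]
      have hRs : ∫ t : ℝ, ((Set.Iio (0:ℝ)).indicator G) t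
            * (∫ x in Set.Ioi t, ((Set.Iio (0:ℝ)).indicator (fun x => -2 * (phi x * phi' x))) x)
          = -∫ t in Set.Iio 0, (1 - phi t ^ 2) * G t := by
        have h1 : ∀ t : ℝ, ((Set.Iio (0:ℝ)).indicator G) t
              * (∫ x in Set.Ioi t, ((Set.Iio (0:ℝ)).indicator (fun x => -2 * (phi x * phi' x))) x)
            = (Set.Iio (0:ℝ)).indicator
                (fun t => G t * (∫ x in Set.Ioi t,
                  ((Set.Iio (0:ℝ)).indicator (fun x => -2 * (phi x * phi' x))) x)) t := by
          intro t; by_cases ht : t ∈ Set.Iio (0:ℝ) <;> simp [ht]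
        simp_rw [h1]
        rw [MeasureTheory.integral_indicator measurableSet_Iio, ← integral_neg]
        refine setIntegral_congr_fun measurableSet_Iio (fun t ht => ?_)
        have hset : Set.Iio (0:ℝ) ∩ Set.Ioi t = Set.Ioo t 0 := by
          rw [Set.inter_comm, Set.Ioi_inter_Iio]
        rw [MeasureTheory.integral_indicator measurableSet_Iio,
          Measure.restrict_restrict measurableSet_Iio, hset,
          ← MeasureTheory.integral_Ioc_eq_integral_Ioo,
          ← intervalIntegral.integral_of_le (le_of_lt ht)]
        have hW : ∫ s in t..(0:ℝ), -2 * (phi s * phi' s) = -(1 - phi t ^ 2) := by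
          rw [intervalIntegral.integral_symm (a := 0) (b := t), ← Wprim t]
        rw [hW]
        ring
      have hcomb : ∫ x in Set.Iio 0, -2 * (phi x * phi' x) * ‖v x‖ ^ 2
          = -∫ t in Set.Iio 0, (1 - phi t ^ 2) * G t := by rw [← hLs, fs, hRs]
      linarith
    have hsplit1 : (∫ x in Set.Iic 0, (1 - phi x ^ 2) * G x)
        + (∫ x in Set.Ioi 0, (1 - phi x ^ 2) * G x) = ∫ x : ℝ, (1 - phi x ^ 2) * G x :=
      intervalIntegral.integral_Iic_add_Ioi hWG_int.integrableOn hWG_int.integrableOn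
    have hsplit2 : (∫ x in Set.Iic 0, -2 * (phi x * phi' x) * ‖v x‖ ^ 2)
        + (∫ x in Set.Ioi 0, -2 * (phi x * phi' x) * ‖v x‖ ^ 2)
        = ∫ x : ℝ, -2 * (phi x * phi' x) * ‖v x‖ ^ 2 :=
      intervalIntegral.integral_Iic_add_Ioi hmg_int.integrableOn hmg_int.integrableOn
    have e1 : ∫ x in Set.Iic 0, (1 - phi x ^ 2) * G x
        = ∫ x in Set.Iio 0, (1 - phi x ^ 2) * G x :=
      MeasureTheory.integral_Iic_eq_integral_Iio
    have e2 : ∫ x in Set.Iic 0, -2 * (phi x * phi' x) * ‖v x‖ ^ 2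
        = ∫ x in Set.Iio 0, -2 * (phi x * phi' x) * ‖v x‖ ^ 2 :=
      MeasureTheory.integral_Iic_eq_integral_Iio
    linarith
  -- final assembly
  have hphi_cast : ∀ x : ℝ, (1 - ((phi x : ℝ) : ℂ) ^ 2) = (((1 - phi x ^ 2 : ℝ)) : ℂ) := by
    intro x; push_cast; ring
  have hphi_bound : ∀ x : ℝ, ‖(1 - ((phi x : ℝ) : ℂ) ^ 2)‖ ≤ 1 := by
    intro x
    rw [hphi_cast x, Complex.norm_real, Real.norm_eq_abs, phi_sq]
    have h1 := Real.exp_pos (-(2 * |x|))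
    have h2 : Real.exp (-(2 * |x|)) ≤ 1 := by
      rw [Real.exp_le_one_iff]
      have := _root_.abs_nonneg x
      linarith
    refine _root_.abs_le.2 ⟨by linarith, by linarith⟩
  have hI1 : Integrable (fun ξ : ℝ => (1 - ((phi ξ : ℝ) : ℂ) ^ 2)
      * (v' ξ * (starRingEnd ℂ) (v ξ))) volume := by
    refine Integrable.bdd_mul (c := 1) hF ?_ ?_
    · refine Continuous.aestronglyMeasurable ?_
      have hphic : Continuous fun x : ℝ => ((phi x : ℝ) : ℂ) :=
        Complex.continuous_ofReal.comp (Real.continuous_exp.comp (_root_.continuous_abs.neg))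
      exact continuous_const.sub (hphic.pow 2)
    · exact Filter.Eventually.of_forall hphi_bound
  have hvv : Integrable (fun t => v t * (starRingEnd ℂ) (v t)) volume :=
    mul_L2_integrable hv hvc
  have hI2 : Integrable (fun ξ : ℝ => (((4 - b) * phi ξ * phi' ξ : ℝ) : ℂ)
      * (v ξ * (starRingEnd ℂ) (v ξ))) volume := by
    refine Integrable.bdd_mul (c := |4 - b|) hvv ?_ ?_
    · refine Measurable.aestronglyMeasurable (Complex.measurable_ofReal.comp ?_)
      have hmulfun : (fun x : ℝ => (4 - b) * phi x * phi' x)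
          = fun x => (4 - b) * (-Real.sign x * Real.exp (-(2 * |x|))) := by
        funext x; rw [mul_assoc, phi_mul_phi' x]
      rw [hmulfun]
      exact measurable_const.mul ((measurable_sign_real.neg).mul
        (Real.measurable_exp.comp ((measurable_const.mul measurable_abs).neg)))
    · refine Filter.Eventually.of_forall fun x => ?_
      rw [Complex.norm_real, Real.norm_eq_abs, mul_assoc, _root_.abs_mul]
      nlinarith [phiphi'_le_one x, _root_.abs_nonneg ((4:ℝ) - b),
        _root_.abs_nonneg (phi x * phi' x)]
  have hlamvv : Integrable (fun ξ : ℝ => lam * (v ξ * (starRingEnd ℂ) (v ξ))) volume :=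
    hvv.const_mul lam
  have hAB : Integrable (fun ξ : ℝ => (1 - ((phi ξ : ℝ) : ℂ) ^ 2) * (v' ξ * (starRingEnd ℂ) (v ξ))
      + (((4 - b) * phi ξ * phi' ξ : ℝ) : ℂ) * (v ξ * (starRingEnd ℂ) (v ξ))) volume :=
    hI1.add hI2
  have hfcv : ∫ ξ : ℝ, f ξ * (starRingEnd ℂ) (v ξ)
      = (∫ ξ : ℝ, (1 - ((phi ξ : ℝ) : ℂ) ^ 2) * (v' ξ * (starRingEnd ℂ) (v ξ)))
        + (∫ ξ : ℝ, (((4 - b) * phi ξ * phi' ξ : ℝ) : ℂ) * (v ξ * (starRingEnd ℂ) (v ξ)))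
        - ∫ ξ : ℝ, lam * (v ξ * (starRingEnd ℂ) (v ξ)) := by
    rw [← integral_add hI1 hI2]
    rw [← integral_sub hAB hlamvv]
    refine integral_congr_ae ?_
    filter_upwards [heq] with ξ hξ
    rw [← hξ]
    ring
  -- real parts of each piece
  have hvvre : ∀ ξ : ℝ, v ξ * (starRingEnd ℂ) (v ξ) = ((‖v ξ‖ ^ 2 : ℝ) : ℂ) := by
    intro ξ
    rw [Complex.mul_conj]
    norm_cast
    rw [Complex.normSq_eq_norm_sq]
  have hre1 : (∫ ξ : ℝ, (1 - ((phi ξ : ℝ) : ℂ) ^ 2) * (v' ξ * (starRingEnd ℂ) (v ξ))).re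
      = ∫ ξ : ℝ, phi ξ * phi' ξ * ‖v ξ‖ ^ 2 := by
    have h1 := integral_re hI1
    simp only [RCLike.re_to_complex] at h1
    have h2fun : (fun ξ : ℝ => ((1 - ((phi ξ : ℝ) : ℂ) ^ 2) * (v' ξ * (starRingEnd ℂ) (v ξ))).re)
        = fun ξ : ℝ => (1/2 : ℝ) * ((1 - phi ξ ^ 2) * G ξ) := by
      funext ξ
      rw [hphi_cast ξ, Complex.re_ofReal_mul, hGdef]
      ring
    rw [← h1, h2fun, integral_const_mul, step2]
    have h4fun : (fun x : ℝ => -2 * (phi x * phi' x) * ‖v x‖ ^ 2)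
        = fun x : ℝ => (-2 : ℝ) * (phi x * phi' x * ‖v x‖ ^ 2) := by
      funext x; ring
    rw [h4fun, integral_const_mul]
    ring
  have hre2 : (∫ ξ : ℝ, (((4 - b) * phi ξ * phi' ξ : ℝ) : ℂ) * (v ξ * (starRingEnd ℂ) (v ξ))).re
      = (4 - b) * ∫ ξ : ℝ, phi ξ * phi' ξ * ‖v ξ‖ ^ 2 := by
    have h1 := integral_re hI2
    simp only [RCLike.re_to_complex] at h1
    have hfun : (fun ξ : ℝ =>
          ((((4 - b) * phi ξ * phi' ξ : ℝ) : ℂ) * (v ξ * (starRingEnd ℂ) (v ξ))).re)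
        = fun ξ : ℝ => (4 - b) * (phi ξ * phi' ξ * ‖v ξ‖ ^ 2) := by
      funext ξ
      rw [hvvre ξ, ← Complex.ofReal_mul, Complex.ofReal_re]
      ring
    rw [← h1, hfun, integral_const_mul]
  have hre3 : (∫ ξ : ℝ, lam * (v ξ * (starRingEnd ℂ) (v ξ))).re
      = lam.re * ∫ ξ : ℝ, ‖v ξ‖ ^ 2 := by
    have h1 := integral_re hlamvv
    simp only [RCLike.re_to_complex] at h1
    have hfun : (fun ξ : ℝ => (lam * (v ξ * (starRingEnd ℂ) (v ξ))).re)
        = fun ξ : ℝ => lam.re * ‖v ξ‖ ^ 2 := by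
      funext ξ
      rw [hvvre ξ, Complex.mul_re, Complex.ofReal_re, Complex.ofReal_im, mul_zero, sub_zero]
    rw [← h1, hfun, integral_const_mul]
  have final := congrArg Complex.re hfcv
  rw [Complex.sub_re, Complex.add_re, hre1, hre2, hre3] at final
  linarith
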